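/- Let L be the backward shift on ℓ²(ℕ) and let M be the diagonal multiplication operator with Me_n = n^{−1/2} e_n for even n and Me_n = 0 for odd n. Set C = ML. Then C² = 0 (so C is nilpotent and e^C − I = C), the products (e^C − I)(e^C − I) are trace class (indeed zero), det(e^C e^C e^{−C} e^{−C}) = 1, but (e^C − I)(e^{C*} − I) = CC* = M² is not trace class. Thus the adjoint condition (iii) in the main theorem is sufficient but not necessary. -/

import Mathlib

open Filter NormedSpace ContinuousLinearMap
open scoped Topology

noncomputable section

variable {H : Type} [NormedAddCommGroup H] [InnerProductSpace ℂ H] [CompleteSpace H]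

/-- `T` is a Hilbert–Schmidt operator: for every Hilbert basis, `∑ ‖T eᵢ‖² < ∞`. -/
def IsHilbertSchmidt (T : H →L[ℂ] H) : Prop :=
  ∀ (ι : Type) (b : HilbertBasis ι ℂ H), Summable fun i => ‖T (b i)‖ ^ 2

/-- `T` is a trace class operator, i.e. a product of two Hilbert–Schmidt operators. -/
def IsTraceClass (T : H →L[ℂ] H) : Prop :=
  ∃ A B : H →L[ℂ] H, IsHilbertSchmidt A ∧ IsHilbertSchmidt B ∧ T = A ∘L B

/-- `T` is trace class and its trace equals `τ`:
for every Hilbert basis, `∑ ⟪eᵢ, T eᵢ⟫ = τ`. -/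
def HasTrace (T : H →L[ℂ] H) (τ : ℂ) : Prop :=
  IsTraceClass T ∧
  ∀ (ι : Type) (b : HilbertBasis ι ℂ H),
    HasSum (fun i => (inner ℂ (b i) (T (b i)) : ℂ)) τ

/-- `T = I + S` with `S` trace class, and the Fredholm determinant of `T` equals `d`:
for every Hilbert basis, the finite-section determinants of `T` converge to `d`
along the net of finite subsets of the index set. -/
def HasFredholmDet (T : H →L[ℂ] H) (d : ℂ) : Prop :=
  IsTraceClass (T - 1) ∧
  ∀ (ι : Type) (b : HilbertBasis ι ℂ H),
    letI := Classical.decEq ι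
    Filter.Tendsto (fun s : Finset ι =>
      Matrix.det (Matrix.of fun i j : s => (inner ℂ (b (i : ι)) (T (b (j : ι))) : ℂ)))
      Filter.atTop (nhds d)


/-!
The weight `d n = n^{-1/2}` (even `n ≠ 0`, else `0`) vanishes at one of any two consecutive
indices, and `C = ML` sends `e_{n+1}` to `d n • e_n`, so `C² = 0`. Hence `e^{±C} = I ± C`, which
makes the first four claims exact computations. Since `L L* = I`, `C C* = M L L* M = M²`, the
diagonal operator with entries `1/n` at even `n`. The diagonal `⟪eᵢ, A B eᵢ⟫` of a trace class
operator is absolutely summable, being bounded by `‖A* eᵢ‖ ‖B eᵢ‖` with `A*` and `B`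
Hilbert–Schmidt; but `∑ 1/(2k)` diverges.
-/

open scoped ENNReal InnerProductSpace lp

section Parseval

variable {ι 𝕜 E : Type*} [RCLike 𝕜] [NormedAddCommGroup E] [InnerProductSpace 𝕜 E]

theorem HilbertBasis.hasSum_nnnorm_inner_sq (b : HilbertBasis ι 𝕜 E) (x : E) :
    HasSum (fun i => ‖⟪b i, x⟫_𝕜‖₊ ^ 2) (‖x‖₊ ^ 2) := by
  have h := lp.hasSum_norm (p := 2) (by norm_num) (b.repr x)
  simp only [b.repr_apply_apply, LinearIsometryEquiv.norm_map, ENNReal.toReal_ofNat,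
    Real.rpow_two] at h
  exact NNReal.hasSum_coe.mp (by simpa using h)

theorem HilbertBasis.tsum_enorm_inner_sq (b : HilbertBasis ι 𝕜 E) (x : E) :
    ∑' i, ‖⟪b i, x⟫_𝕜‖ₑ ^ 2 = ‖x‖ₑ ^ 2 := by
  simp only [enorm, ← ENNReal.coe_pow]
  rw [← ENNReal.coe_tsum (b.hasSum_nnnorm_inner_sq x).summable,
    (b.hasSum_nnnorm_inner_sq x).tsum_eq]

theorem summable_norm_sq_iff_tsum_enorm_sq_ne_top (f : ι → E) :
    Summable (fun i => ‖f i‖ ^ 2) ↔ ∑' i, ‖f i‖ₑ ^ 2 ≠ ∞ := by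
  simp only [enorm, ← ENNReal.coe_pow, ENNReal.tsum_coe_ne_top_iff_summable, ← NNReal.summable_coe,
    NNReal.coe_pow, coe_nnnorm]

variable [CompleteSpace E]

theorem HilbertBasis.tsum_enorm_adjoint_apply_sq (b : HilbertBasis ι 𝕜 E) (A : E →L[𝕜] E) :
    ∑' i, ‖adjoint A (b i)‖ₑ ^ 2 = ∑' i, ‖A (b i)‖ₑ ^ 2 :=
  calc ∑' i, ‖adjoint A (b i)‖ₑ ^ 2 = ∑' i, ∑' j, ‖⟪b j, adjoint A (b i)⟫_𝕜‖ₑ ^ 2 := by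
        simp only [b.tsum_enorm_inner_sq]
    _ = ∑' i, ∑' j, ‖⟪b i, A (b j)⟫_𝕜‖ₑ ^ 2 := by
        refine tsum_congr fun i => tsum_congr fun j => ?_
        rw [adjoint_inner_right, ← ofReal_norm, norm_inner_symm, ofReal_norm]
    _ = ∑' j, ‖A (b j)‖ₑ ^ 2 := by
        rw [ENNReal.tsum_comm]
        simp only [b.tsum_enorm_inner_sq]

end Parseval

section Operators

variable {E : Type} [NormedAddCommGroup E] [InnerProductSpace ℂ E]

theorem isHilbertSchmidt_zero : IsHilbertSchmidt (0 : E →L[ℂ] E) := fun _ _ => by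
  simp

theorem isTraceClass_zero : IsTraceClass (0 : E →L[ℂ] E) :=
  ⟨0, 0, isHilbertSchmidt_zero, isHilbertSchmidt_zero, by simp⟩

theorem hasFredholmDet_one : HasFredholmDet (1 : E →L[ℂ] E) 1 := by
  refine ⟨by simpa using isTraceClass_zero, fun ι b => ?_⟩
  classical
  have hsection (s : Finset ι) :
      (Matrix.of fun i j : s => ⟪b i, (1 : E →L[ℂ] E) (b j)⟫_ℂ) = 1 := by
    ext i j
    rw [Matrix.of_apply, one_apply_eq_self, orthonormal_iff_ite.mp b.orthonormal, Matrix.one_apply]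
    exact if_congr Subtype.ext_iff.symm rfl rfl
  simp only [hsection, Matrix.det_one]
  exact tendsto_const_nhds

variable [CompleteSpace E]

theorem IsHilbertSchmidt.adjoint {A : E →L[ℂ] E} (hA : IsHilbertSchmidt A) :
    IsHilbertSchmidt (adjoint A) := fun ι b => by
  rw [summable_norm_sq_iff_tsum_enorm_sq_ne_top, b.tsum_enorm_adjoint_apply_sq,
    ← summable_norm_sq_iff_tsum_enorm_sq_ne_top]
  exact hA ι b

theorem IsTraceClass.summable_norm_inner {T : E →L[ℂ] E} (hT : IsTraceClass T) {ι : Type}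
    (b : HilbertBasis ι ℂ E) : Summable fun i => ‖⟪b i, T (b i)⟫_ℂ‖ := by
  obtain ⟨A, B, hA, hB, rfl⟩ := hT
  refine .of_nonneg_of_le (fun _ => norm_nonneg _) (fun i => ?_)
    (((hA.adjoint ι b).add (hB ι b)).div_const 2)
  calc ‖⟪b i, (A ∘L B) (b i)⟫_ℂ‖ = ‖⟪adjoint A (b i), B (b i)⟫_ℂ‖ := by
        rw [comp_apply, adjoint_inner_left]
    _ ≤ ‖adjoint A (b i)‖ * ‖B (b i)‖ := norm_inner_le_norm _ _
    _ ≤ (‖adjoint A (b i)‖ ^ 2 + ‖B (b i)‖ ^ 2) / 2 := by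
        nlinarith [two_mul_le_add_sq ‖adjoint A (b i)‖ ‖B (b i)‖]

end Operators

section SquareZero

variable {𝔸 : Type*} [Ring 𝔸] [TopologicalSpace 𝔸] [IsTopologicalRing 𝔸] {x : 𝔸}

theorem exp_eq_one_add_of_mul_self_eq_zero (𝕂 : Type*) [Field 𝕂] [CharZero 𝕂] [Algebra 𝕂 𝔸]
    (hx : x * x = 0) : exp x = 1 + x := by
  have hpow : ∀ n, 2 ≤ n → x ^ n = 0 := fun n hn => by
    rw [← Nat.sub_add_cancel hn, pow_add, sq, hx, mul_zero]
  rw [congrFun (exp_eq_tsum 𝕂) x, tsum_eq_sum (s := Finset.range 2) fun n hn => by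
    rw [hpow n (by simp at hn; omega), smul_zero]]
  simp [Finset.sum_range_succ]

theorem exp_mul_exp_neg_of_mul_self_eq_zero (𝕂 : Type*) [Field 𝕂] [CharZero 𝕂] [Algebra 𝕂 𝔸]
    (hx : x * x = 0) : exp x * exp (-x) = 1 := by
  rw [exp_eq_one_add_of_mul_self_eq_zero 𝕂 hx,
    exp_eq_one_add_of_mul_self_eq_zero 𝕂 (by rwa [neg_mul_neg])]
  noncomm_ring
  rw [hx, smul_zero, add_zero]

end SquareZero

theorem HilbertBasis.default_apply {ι 𝕜 : Type*} [RCLike 𝕜] [DecidableEq ι] (i : ι) :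
    (default : HilbertBasis ι 𝕜 ℓ²(ι, 𝕜)) i = lp.single 2 i 1 :=
  (HilbertBasis.repr_symm_single _ i).symm

def IsBackwardShift (L : ℓ²(ℕ, ℂ) →L[ℂ] ℓ²(ℕ, ℂ)) : Prop :=
  ∀ f n, L f n = f (n + 1)

def IsRealDiagonal {ι : Type*} (M : ℓ²(ι, ℂ) →L[ℂ] ℓ²(ι, ℂ)) (d : ι → ℝ) : Prop :=
  ∀ f i, M f i = d i * f i

namespace IsBackwardShift

variable {L : ℓ²(ℕ, ℂ) →L[ℂ] ℓ²(ℕ, ℂ)}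

theorem apply_single_succ (hL : IsBackwardShift L) (n : ℕ) :
    L (lp.single 2 (n + 1) 1) = lp.single 2 n 1 := by
  ext m
  rw [hL]
  simp [Pi.single_apply]

theorem adjoint_apply_succ (hL : IsBackwardShift L) (f : ℓ²(ℕ, ℂ)) (n : ℕ) :
    adjoint L f (n + 1) = f n :=
  calc adjoint L f (n + 1) = ⟪lp.single 2 (n + 1) (1 : ℂ), adjoint L f⟫_ℂ := by
        simp [lp.inner_single_left]
    _ = f n := by
        rw [adjoint_inner_right, hL.apply_single_succ]
        simp [lp.inner_single_left]

theorem mul_adjoint (hL : IsBackwardShift L) : L * adjoint L = 1 := by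
  ext f n
  rw [mul_apply_eq_comp, hL, hL.adjoint_apply_succ, one_apply_eq_self]

theorem mul_self_eq_zero_of_diagonal (hL : IsBackwardShift L) {M : ℓ²(ℕ, ℂ) →L[ℂ] ℓ²(ℕ, ℂ)}
    {d : ℕ → ℝ} (hM : IsRealDiagonal M d) (hd : ∀ n, d n * d (n + 1) = 0) :
    (M * L) * (M * L) = 0 := by
  have hC (g : ℓ²(ℕ, ℂ)) (m : ℕ) : (M * L) g m = d m * g (m + 1) := by
    rw [← hL g m]
    exact hM (L g) m
  refine ContinuousLinearMap.ext fun f => lp.ext <| funext fun n => ?_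
  change (M * L) ((M * L) f) n = (0 : ℓ²(ℕ, ℂ)) n
  rw [hC, hC, ← mul_assoc, ← Complex.ofReal_mul, hd]
  simp

theorem mul_mul_adjoint (hL : IsBackwardShift L) {M : ℓ²(ℕ, ℂ) →L[ℂ] ℓ²(ℕ, ℂ)}
    (hM : IsSelfAdjoint M) : (M * L) * adjoint (M * L) = M * M := by
  rw [← star_eq_adjoint, star_mul, hM.star_eq, star_eq_adjoint, mul_assoc, ← mul_assoc L,
    hL.mul_adjoint, one_mul]

end IsBackwardShift

namespace IsRealDiagonal

variable {ι : Type*} {M : ℓ²(ι, ℂ) →L[ℂ] ℓ²(ι, ℂ)} {d : ι → ℝ}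

theorem isSelfAdjoint (hM : IsRealDiagonal M d) : IsSelfAdjoint M := by
  refine ((eq_adjoint_iff M M).mpr fun f g => ?_).symm
  rw [lp.inner_eq_tsum, lp.inner_eq_tsum]
  refine tsum_congr fun i => ?_
  rw [hM, hM]
  simp only [RCLike.inner_apply, map_mul, Complex.conj_ofReal]
  ring

theorem inner_single_mul_self [DecidableEq ι] (hM : IsRealDiagonal M d) (i : ι) :
    ⟪lp.single 2 i (1 : ℂ), (M * M) (lp.single 2 i 1)⟫_ℂ = (d i ^ 2 : ℝ) := by
  rw [lp.inner_single_left, mul_apply_eq_comp, hM, hM]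
  simp [sq]

end IsRealDiagonal

theorem IsRealDiagonal.summable_sq_of_isTraceClass_mul_self {ι : Type}
    {M : ℓ²(ι, ℂ) →L[ℂ] ℓ²(ι, ℂ)} {d : ι → ℝ} (hM : IsRealDiagonal M d)
    (h : IsTraceClass (M * M)) : Summable fun i => d i ^ 2 := by
  classical
  refine (h.summable_norm_inner default).congr fun i => ?_
  rw [HilbertBasis.default_apply, hM.inner_single_mul_self, Complex.norm_real,
    Real.norm_of_nonneg (sq_nonneg _)]

def evenInvSqrt (n : ℕ) : ℝ :=
  if Even n ∧ n ≠ 0 then (√n)⁻¹ else 0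

theorem evenInvSqrt_mul_evenInvSqrt_succ (n : ℕ) : evenInvSqrt n * evenInvSqrt (n + 1) = 0 := by
  rcases Nat.even_or_odd n with hn | hn
  · simp [evenInvSqrt, Nat.even_add_one, hn]
  · simp [evenInvSqrt, Nat.not_even_iff_odd.mpr hn]

theorem not_summable_evenInvSqrt_sq : ¬ Summable fun n => evenInvSqrt n ^ 2 := by
  intro h
  have hinj : Function.Injective fun k : ℕ => 2 * k + 2 := fun a b hab => by simp at hab; omega
  have hharmonic : Summable fun k : ℕ => ((k + 1 : ℕ) : ℝ)⁻¹ := by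
    refine ((h.comp_injective hinj).mul_left 2).congr fun k => ?_
    have hk : Even (2 * k + 2) := ⟨k + 1, by ring⟩
    simp only [Function.comp_apply, evenInvSqrt, hk, true_and, if_pos (by omega : 2 * k + 2 ≠ 0),
      inv_pow, Real.sq_sqrt (Nat.cast_nonneg _)]
    push_cast
    field_simp
  exact Real.not_summable_natCast_inv ((summable_nat_add_iff 1).mp hharmonic)

/-- **Example 2.5.** Let `L` be the backward shift on `ℓ²(ℕ)` and `M` the diagonal
operator with entries `n^{−1/2}` at even `n ≠ 0` and `0` otherwise, and set `C = ML`.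
Then `C² = 0`, `e^C − I = C`, `(e^C−I)(e^C−I)` is trace class,
`det (e^C e^C e^{−C} e^{−C}) = 1`, but `(e^C−I)(e^{C*}−I) = CC* = M²` is not trace
class: condition (iii) of Theorem 1.2 is sufficient but not necessary. -/
theorem adjoint_condition_not_necessary
    (L M : lp (fun _ : ℕ => ℂ) 2 →L[ℂ] lp (fun _ : ℕ => ℂ) 2)
    (hL : ∀ (f : lp (fun _ : ℕ => ℂ) 2) (n : ℕ), L f n = f (n + 1))
    (hM : ∀ (f : lp (fun _ : ℕ => ℂ) 2) (n : ℕ),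
      M f n = if Even n ∧ n ≠ 0 then (((Real.sqrt n)⁻¹ : ℝ) : ℂ) * f n else 0) :
    (M * L) * (M * L) = 0 ∧
      exp (M * L) - 1 = M * L ∧
      IsTraceClass ((exp (M * L) - 1) * (exp (M * L) - 1)) ∧
      HasFredholmDet (exp (M * L) * exp (M * L)
        * exp (-(M * L)) * exp (-(M * L))) 1 ∧
      (exp (M * L) - 1) * (exp (ContinuousLinearMap.adjoint (M * L)) - 1)
        = (M * L) * ContinuousLinearMap.adjoint (M * L) ∧
      (M * L) * ContinuousLinearMap.adjoint (M * L) = M * M ∧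
      ¬ IsTraceClass (M * M) := by
  have hdiag : IsRealDiagonal M evenInvSqrt := fun f n => by
    rw [hM, evenInvSqrt]
    split_ifs <;> simp
  have hC2 : (M * L) * (M * L) = 0 :=
    IsBackwardShift.mul_self_eq_zero_of_diagonal hL hdiag evenInvSqrt_mul_evenInvSqrt_succ
  have hexp : exp (M * L) = 1 + M * L := exp_eq_one_add_of_mul_self_eq_zero ℂ hC2
  have hexp_adjoint : exp (adjoint (M * L)) = 1 + adjoint (M * L) :=
    exp_eq_one_add_of_mul_self_eq_zero ℂ (by rw [← star_eq_adjoint, ← star_mul, hC2, star_zero])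
  have hunit : exp (M * L) * exp (-(M * L)) = 1 := exp_mul_exp_neg_of_mul_self_eq_zero ℂ hC2
  have hCC : (M * L) * adjoint (M * L) = M * M :=
    IsBackwardShift.mul_mul_adjoint hL hdiag.isSelfAdjoint
  refine ⟨hC2, by rw [hexp, add_sub_cancel_left], ?_, ?_, ?_, hCC, ?_⟩
  · rw [hexp, add_sub_cancel_left, hC2]
    exact isTraceClass_zero
  · rw [mul_assoc (exp _), hunit, mul_one, hunit]
    exact hasFredholmDet_one
  · rw [hexp, hexp_adjoint, add_sub_cancel_left, add_sub_cancel_left]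
  · exact fun h => not_summable_evenInvSqrt_sq (hdiag.summable_sq_of_isTraceClass_mul_self h)
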